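/- arXiv:2410.20224 — 2 statements merged into one kernel-verified Lean document; each statement's English description precedes it below -/
import Mathlib

section
/- Let a : Fin k → L be a configuration over a finite lattice L whose values are pairwise comparable (for all i, j, either a i ≤ a j or a j ≤ a i). Then every combination of a with itself (with respect to any permutation φ of Fin k and any index u) is dominated by the configuration of a. -/
/-!
At position `u` the self-combination holds `a u ⊔ a (φ u)`, which by comparability is `a u` or
`a (φ u)`; every other entry `a i ⊓ a (φ i)` lies below both `a i` and `a (φ i)`. Hence the
combination is pointwise below `a` or pointwise below `a ∘ φ`, and `a ∘ φ` has the same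
configuration as `a`.
-/

namespace RoundElim

/-- The configuration (multiset of cardinality `k`) associated to a function `Fin k → α`. -/
def ofFn {α : Type*} {k : ℕ} (f : Fin k → α) : Multiset α :=
  (List.ofFn f : List α)

/-- The combination of the representatives `a`, `b` with respect to the permutation `φ`
and the index `u`: supremum at position `u`, infimum everywhere else. -/
def combineL {L : Type*} [Lattice L] {k : ℕ} (a b : Fin k → L)
    (φ : Equiv.Perm (Fin k)) (u : Fin k) : Fin k → L :=
  fun i => if i = u then a i ⊔ b (φ i) else a i ⊓ b (φ i)

section Configuration

variable {α β : Type*} {k : ℕ}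

theorem ofFn_comp_perm (f : Fin k → α) (σ : Equiv.Perm (Fin k)) : ofFn (f ∘ σ) = ofFn f :=
  Multiset.coe_eq_coe.2 (σ.ofFn_comp_perm f)

theorem rel_ofFn_of_forall {r : α → β → Prop} {f : Fin k → α} {g : Fin k → β}
    (h : ∀ i, r (f i) (g i)) : Multiset.Rel r (ofFn f) (ofFn g) := by
  unfold ofFn
  rw [← Fin.univ_val_map, ← Fin.univ_val_map, Multiset.rel_map]
  exact Multiset.rel_refl_of_refl_on fun i _ => h i

end Configuration

section Combination

variable {L : Type*} [Lattice L] {k : ℕ} {a b : Fin k → L} {φ : Equiv.Perm (Fin k)} {u : Fin k}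

theorem combineL_le_left (h : b (φ u) ≤ a u) (i : Fin k) : combineL a b φ u i ≤ a i := by
  unfold combineL
  split_ifs with hi
  · subst hi
    exact sup_le le_rfl h
  · exact inf_le_left

theorem combineL_le_right (h : a u ≤ b (φ u)) (i : Fin k) : combineL a b φ u i ≤ b (φ i) := by
  unfold combineL
  split_ifs with hi
  · subst hi
    exact sup_le h le_rfl
  · exact inf_le_right

end Combination

theorem self_combination_dominated_general {L : Type*} [Lattice L]
    {k : ℕ} (a : Fin k → L)
    (hcomp : ∀ i j : Fin k, a i ≤ a j ∨ a j ≤ a i)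
    (φ : Equiv.Perm (Fin k)) (u : Fin k) :
    Multiset.Rel (· ≤ ·) (ofFn (combineL a a φ u)) (ofFn a) := by
  rcases hcomp (φ u) u with h | h
  · exact rel_ofFn_of_forall (combineL_le_left h)
  · rw [← ofFn_comp_perm a φ]
    exact rel_ofFn_of_forall (combineL_le_right h)

/-- If the values of `a` are pairwise comparable, then every combination of `a` with itself is
dominated by the configuration of `a`. -/
theorem self_combination_dominated {L : Type*} [Lattice L] [Fintype L]
    {k : ℕ} (hk : 0 < k) (a : Fin k → L)
    (hcomp : ∀ i j : Fin k, a i ≤ a j ∨ a j ≤ a i)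
    (φ : Equiv.Perm (Fin k)) (u : Fin k) :
    Multiset.Rel (· ≤ ·) (ofFn (combineL a a φ u)) (ofFn a) :=
  self_combination_dominated_general a hcomp φ u

end RoundElim
end

section
/- Fix Δ ≥ 1 and order the finite subsets of Fin Δ by reverse inclusion (A ≤ B iff B ⊆ A), so that A ⊔ B = A ∩ B and A ⊓ B = A ∪ B. For a nonempty subset C of Fin Δ, let n(C) be the multiset consisting of Δ − |C| + 1 copies of C and |C| − 1 copies of the empty set. Then for all nonempty subsets C₁, C₂ of Fin Δ, every combination of n(C₁) and n(C₂) (taking intersection at one matched position and union at all other matched positions, for any permutation and index) is dominated by n(C) for some nonempty subset C of Fin Δ, i.e., is related to n(C) by Multiset.Rel (· ≤ ·) in the reverse-inclusion order. (Node-constraint closure in the fixed-point proof for Δ-coloring: applying the combination step to the node constraint of the Δ-coloring fixed point Π_Δ produces no new configurations.) -/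
/-!
For nonempty `C`, the configuration `ofFn f` is dominated by `n(C)` as soon as `C ⊆ f i` at all
but fewer than `|C|` positions (`AlmostSupset C f`): match `Δ - |C| + 1` good positions with the
copies of `C` and the rest with the copies of `∅`. Each `n(C)` has this property, so it suffices to
see that it survives combination. Let `Z₁`, `Z₂` be the exceptional sets of the two arguments and
`u` the position of the intersection. If `u ∈ Z₁`, every position outside `Z₁` takes a union with
`a i ⊇ C₁`, so `C = C₁` works; symmetrically if `u ∈ Z₂`. Otherwise, by inclusion–exclusion,
`C = C₁ ∪ C₂` with exceptions `insert u (Z₁ ∪ Z₂)` works when `|C₁ ∩ C₂| ≤ |Z₁ ∩ Z₂|`, and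
`C = C₁ ∩ C₂` with exceptions `Z₁ ∩ Z₂` works otherwise.
-/

namespace RoundElim

/-- The node configuration `n(C)` of the fixed point `Π_Δ` of `Δ`-coloring:
`Δ - |C| + 1` copies of `C` and `|C| - 1` copies of the empty set. -/
def nConf (Δ : ℕ) (C : Finset (Fin Δ)) : Multiset (Finset (Fin Δ)) :=
  Multiset.replicate (Δ - C.card + 1) C + Multiset.replicate (C.card - 1) ∅

/-- The combination of `a` and `b` w.r.t. `φ` and `u` in the reverse-inclusion lattice on
`Finset (Fin Δ)`: here `⊔ = ∩` (at the distinguished position `u`) and `⊓ = ∪` (elsewhere). -/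
def combineRev {Δ : ℕ} (a b : Fin Δ → Finset (Fin Δ))
    (φ : Equiv.Perm (Fin Δ)) (u : Fin Δ) : Fin Δ → Finset (Fin Δ) :=
  fun i => if i = u then a i ∩ b (φ i) else a i ∪ b (φ i)

open Finset

section Lattice

variable {ι α : Type*}

def AlmostSupset (C : Finset α) (f : ι → Finset α) : Prop :=
  ∃ Z : Finset ι, #Z < #C ∧ ∀ i ∉ Z, C ⊆ f i

lemma AlmostSupset.nonempty {C : Finset α} {f : ι → Finset α} (h : AlmostSupset C f) :
    C.Nonempty := by
  obtain ⟨Z, hZ, -⟩ := h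
  exact card_pos.1 (Nat.zero_lt_of_lt hZ)

lemma AlmostSupset.comp_equiv {ι' : Type*} {C : Finset α} {f : ι → Finset α}
    (h : AlmostSupset C f) (e : ι' ≃ ι) : AlmostSupset C (f ∘ e) := by
  obtain ⟨Z, hZ, hf⟩ := h
  refine ⟨Z.map e.symm.toEmbedding, by rwa [card_map], fun i hi => hf (e i) ?_⟩
  exact fun h => hi (mem_map_equiv.2 (by simpa using h))

variable [DecidableEq ι] [DecidableEq α]

theorem AlmostSupset.exists_of_combine {a b c : ι → Finset α} {C₁ C₂ : Finset α}
    (ha : AlmostSupset C₁ a) (hb : AlmostSupset C₂ b) (u : ι)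
    (hc : ∀ i ≠ u, a i ∪ b i ⊆ c i) (hcu : a u ∩ b u ⊆ c u) :
    ∃ C, AlmostSupset C c := by
  obtain ⟨Z₁, hZ₁, ha⟩ := ha
  obtain ⟨Z₂, hZ₂, hb⟩ := hb
  by_cases hu₁ : u ∈ Z₁
  · refine ⟨C₁, Z₁, hZ₁, fun i hi => (ha i hi).trans ?_⟩
    exact subset_union_left.trans (hc i (ne_of_mem_of_not_mem hu₁ hi).symm)
  by_cases hu₂ : u ∈ Z₂
  · refine ⟨C₂, Z₂, hZ₂, fun i hi => (hb i hi).trans ?_⟩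
    exact subset_union_right.trans (hc i (ne_of_mem_of_not_mem hu₂ hi).symm)
  have hC := card_union_add_card_inter C₁ C₂
  have hZ := card_union_add_card_inter Z₁ Z₂
  by_cases hs : #(C₁ ∩ C₂) ≤ #(Z₁ ∩ Z₂)
  · refine ⟨C₁ ∪ C₂, insert u (Z₁ ∪ Z₂), ?_, fun i hi => ?_⟩
    · have := card_insert_le u (Z₁ ∪ Z₂)
      omega
    simp only [mem_insert, mem_union, not_or] at hi
    exact (union_subset_union (ha i hi.2.1) (hb i hi.2.2)).trans (hc i hi.1)
  · refine ⟨C₁ ∩ C₂, Z₁ ∩ Z₂, by omega, fun i hi => ?_⟩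
    by_cases hiu : i = u
    · subst hiu
      exact (inter_subset_inter (ha i hu₁) (hb i hu₂)).trans hcu
    refine subset_trans ?_ (hc i hiu)
    rcases not_and_or.1 (mt mem_inter.2 hi) with hi | hi
    · exact inter_subset_left.trans ((ha i hi).trans subset_union_left)
    · exact inter_subset_right.trans ((hb i hi).trans subset_union_right)

end Lattice

lemma ofFn_eq_map_univ {β : Type*} {k : ℕ} (g : Fin k → β) :
    ofFn g = univ.val.map g :=
  (Fin.univ_val_map g).symm

section Configuration

variable {Δ : ℕ} {C : Finset (Fin Δ)} {f : Fin Δ → Finset (Fin Δ)}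

lemma almostSupset_of_ofFn_eq_nConf (hC : C.Nonempty) (h : ofFn f = nConf Δ C) :
    AlmostSupset C f := by
  refine ⟨({i | f i ≠ C} : Finset (Fin Δ)), ?_, fun i hi => (by simpa using hi : f i = C).ge⟩
  have hcount : #{i | f i ≠ C} = Multiset.countP (· ≠ C) (ofFn f) := by
    rw [ofFn_eq_map_univ, Multiset.countP_map, card_def, filter_val]
  rw [hcount, h, nConf, Multiset.countP_add,
    Multiset.countP_eq_zero.2 fun _ hA hne => hne (Multiset.eq_of_mem_replicate hA),
    Multiset.countP_eq_card.2 fun _ hA => (Multiset.eq_of_mem_replicate hA).trans_ne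
      hC.ne_empty.symm, Multiset.card_replicate, zero_add]
  exact Nat.sub_one_lt hC.card_pos.ne'

theorem AlmostSupset.rel_nConf (h : AlmostSupset C f) :
    Multiset.Rel (fun A B => B ⊆ A) (ofFn f) (nConf Δ C) := by
  obtain ⟨Z, hZ, hf⟩ := h
  have hCΔ : #C ≤ Δ := by simpa using card_le_univ C
  obtain ⟨Z', hZZ', hZ'⟩ :=
    exists_superset_card_eq (s := Z) (n := #C - 1) (by omega)
      (by simp only [Fintype.card_fin]; omega)
  have huniv : (univ : Finset (Fin Δ)).val = Z'ᶜ.val + Z'.val := by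
    rw [← disjUnion_val _ _ disjoint_compl_left, disjUnion_eq_union, union_comm, union_compl]
  rw [ofFn_eq_map_univ, huniv, Multiset.map_add, nConf]
  refine Multiset.Rel.add (Multiset.rel_replicate_right.2 ⟨?_, ?_⟩)
    (Multiset.rel_replicate_right.2 ⟨by simpa using hZ', fun _ _ => empty_subset _⟩)
  · simp only [Multiset.card_map, ← card_def, card_compl, Fintype.card_fin, hZ']
    omega
  · simp only [Multiset.mem_map, mem_val, mem_compl]
    rintro _ ⟨i, hi, rfl⟩
    exact hf i (fun hiZ => hi (hZZ' hiZ))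

end Configuration

theorem deltaColoring_node_closure_general (Δ : ℕ) :
    ∀ C₁ C₂ : Finset (Fin Δ), C₁.Nonempty → C₂.Nonempty →
    ∀ a b : Fin Δ → Finset (Fin Δ), ofFn a = nConf Δ C₁ → ofFn b = nConf Δ C₂ →
    ∀ (φ : Equiv.Perm (Fin Δ)) (u : Fin Δ),
    ∃ C : Finset (Fin Δ), C.Nonempty ∧
      Multiset.Rel (fun A B : Finset (Fin Δ) => B ⊆ A)
        (ofFn (combineRev a b φ u)) (nConf Δ C) := by
  intro C₁ C₂ hC₁ hC₂ a b ha hb φ u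
  obtain ⟨C, hC⟩ := (almostSupset_of_ofFn_eq_nConf hC₁ ha).exists_of_combine
    ((almostSupset_of_ofFn_eq_nConf hC₂ hb).comp_equiv φ) u
    (c := combineRev a b φ u) (fun i hi => by simp [combineRev, hi]) (by simp [combineRev])
  exact ⟨C, hC.nonempty, hC.rel_nConf⟩

/-- Node-constraint closure in the fixed-point proof for `Δ`-coloring: every combination of
two node configurations `n(C₁)`, `n(C₂)` of `Π_Δ` is dominated (in the reverse-inclusion
order, i.e. via `Multiset.Rel (fun A B => B ⊆ A)`) by `n(C)` for some nonempty `C`. -/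
theorem deltaColoring_node_closure (Δ : ℕ) (hΔ : 1 ≤ Δ) :
    ∀ C₁ C₂ : Finset (Fin Δ), C₁.Nonempty → C₂.Nonempty →
    ∀ a b : Fin Δ → Finset (Fin Δ), ofFn a = nConf Δ C₁ → ofFn b = nConf Δ C₂ →
    ∀ (φ : Equiv.Perm (Fin Δ)) (u : Fin Δ),
    ∃ C : Finset (Fin Δ), C.Nonempty ∧
      Multiset.Rel (fun A B : Finset (Fin Δ) => B ⊆ A)
        (ofFn (combineRev a b φ u)) (nConf Δ C) :=
  deltaColoring_node_closure_general Δ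

end RoundElim
end
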